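/- arXiv:1401.0190 — 2 statements merged into one kernel-verified Lean document; each statement's English description precedes it below -/
import Mathlib

section
/- If the Rankine-Hugoniot conditions f(s_R,c_R) - f(s_L,c_L) = σ(s_R - s_L) and c_R f(s_R,c_R) - c_L f(s_L,c_L) = σ(s_R c_R + a(c_R) - s_L c_L - a(c_L)) hold with c_L ≠ c_R, then σ = f(s_L,c_L)/(s_L + ā) = f(s_R,c_R)/(s_R + ā), where ā = (a(c_R) - a(c_L))/(c_R - c_L). -/
/-! Subtracting `c_L` (resp. `c_R`) times the first Rankine–Hugoniot equation from the second
eliminates the flux on one side and leaves `(c_R - c_L) f_R = σ ((c_R - c_L) s_R + a(c_R) - a(c_L))`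
(resp. the same with `L`), which is `f = σ (s + ā)` after dividing by `c_R - c_L`. -/

section RankineHugoniot

variable {K : Type*} [Field K] {fL fR sL sR cL cR aL aR σ : K}

theorem rankineHugoniot_flux_eq_right (hc : cL ≠ cR) (h₁ : fR - fL = σ * (sR - sL))
    (h₂ : cR * fR - cL * fL = σ * (sR * cR + aR - sL * cL - aL)) :
    fR = σ * (sR + (aR - aL) / (cR - cL)) := by
  have hd : cR - cL ≠ 0 := sub_ne_zero.mpr hc.symm
  field_simp
  linear_combination h₂ - cL * h₁

theorem rankineHugoniot_flux_eq_left (hc : cL ≠ cR) (h₁ : fR - fL = σ * (sR - sL))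
    (h₂ : cR * fR - cL * fL = σ * (sR * cR + aR - sL * cL - aL)) :
    fL = σ * (sL + (aR - aL) / (cR - cL)) := by
  have hd : cR - cL ≠ 0 := sub_ne_zero.mpr hc.symm
  field_simp
  linear_combination h₂ - cR * h₁

end RankineHugoniot

theorem stmt0 (f : ℝ → ℝ → ℝ) (a : ℝ → ℝ) (sL sR cL cR σ : ℝ)
    (hc : cL ≠ cR)
    (abar : ℝ) (habar : abar = (a cR - a cL) / (cR - cL))
    (hL : sL + abar ≠ 0) (hR : sR + abar ≠ 0)
    (hRH1 : f sR cR - f sL cL = σ * (sR - sL))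
    (hRH2 : cR * f sR cR - cL * f sL cL
      = σ * (sR * cR + a cR - sL * cL - a cL)) :
    σ = f sL cL / (sL + abar) ∧ σ = f sR cR / (sR + abar) := by
  subst habar
  constructor
  · rw [eq_div_iff hL, rankineHugoniot_flux_eq_left hc hRH1 hRH2]
  · rw [eq_div_iff hR, rankineHugoniot_flux_eq_right hc hRH1 hRH2]
end

section
/- Let g : [0,1] → ℝ be continuous, strictly concave, positive on (0,1) with g(0) = g(1) = 0, and let α > 0. Then s ↦ g(s)/(s + α) attains its maximum on [0,1] at the unique tangency point s* where g'(s*) = g(s*)/(s* + α), and g(s)/(s+α) is strictly increasing on [0, s*] and strictly decreasing on [s*, 1]. -/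
/-!
The ratio `g s / (s + α)` is the slope of the chord from `(-α, 0)` to `(s, g s)`. A strictly
concave function divided by a positive affine one is strictly quasiconcave, so the ratio increases
strictly up to its maximiser and decreases strictly after it. The maximum is interior because the
ratio vanishes at the endpoints, so Fermat's rule makes the maximiser a tangency point. Conversely,
the tangent at any tangency point passes through `(-α, 0)` and lies above the concave graph, so
every tangency point is a maximiser, hence equal to the unique one.
-/

open Set

def StrictQuasiconcaveOn (𝕜 : Type*) {E β : Type*} [Semiring 𝕜] [PartialOrder 𝕜]
    [AddCommMonoid E] [LinearOrder β] [SMul 𝕜 E] (s : Set E) (f : E → β) : Prop :=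
  Convex 𝕜 s ∧ ∀ ⦃x⦄, x ∈ s → ∀ ⦃y⦄, y ∈ s → x ≠ y → ∀ ⦃a b : 𝕜⦄, 0 < a → 0 < b → a + b = 1 →
    min (f x) (f y) < f (a • x + b • y)

namespace StrictQuasiconcaveOn

variable {𝕜 E β : Type*} [Field 𝕜] [LinearOrder 𝕜] [IsStrictOrderedRing 𝕜] [LinearOrder β]

section Module

variable [AddCommGroup E] [Module 𝕜 E] {s : Set E} {f : E → β} {x y c : E}

theorem lt_of_isMaxOn (hf : StrictQuasiconcaveOn 𝕜 s f) (hmax : IsMaxOn f s c) (hc : c ∈ s)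
    (hx : x ∈ s) (hxc : x ≠ c) : f x < f c := by
  have hmid := hf.2 hx hc hxc one_half_pos one_half_pos (add_halves (1 : 𝕜))
  have hle := hmax (hf.1 hx hc one_half_pos.le one_half_pos.le (add_halves (1 : 𝕜)))
  exact (min_lt_iff.1 (hmid.trans_le hle)).resolve_right (lt_irrefl _)

theorem eq_of_isMaxOn (hf : StrictQuasiconcaveOn 𝕜 s f) (hx : x ∈ s) (hy : y ∈ s)
    (hmaxx : IsMaxOn f s x) (hmaxy : IsMaxOn f s y) : x = y := by
  by_contra hxy
  exact (hmaxx hy).not_gt (hf.lt_of_isMaxOn hmaxy hy hx hxy)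

end Module

variable {s : Set 𝕜} {f : 𝕜 → β} {x y z c : 𝕜}

theorem min_lt_of_lt_of_lt (hf : StrictQuasiconcaveOn 𝕜 s f) (hx : x ∈ s) (hz : z ∈ s)
    (hxy : x < y) (hyz : y < z) : min (f x) (f z) < f y := by
  obtain ⟨a, b, ha, hb, hab, rfl⟩ : y ∈ openSegment 𝕜 x z := by
    rw [openSegment_eq_Ioo (hxy.trans hyz)]
    exact ⟨hxy, hyz⟩
  exact hf.2 hx hz (hxy.trans hyz).ne ha hb hab

theorem strictMonoOn_Iic_of_isMaxOn (hf : StrictQuasiconcaveOn 𝕜 s f) (hmax : IsMaxOn f s c)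
    (hc : c ∈ s) : StrictMonoOn f (s ∩ Iic c) := by
  intro x hx y hy hxy
  rcases hy.2.lt_or_eq with hyc | rfl
  · simpa [min_eq_left (hmax hx.1)] using hf.min_lt_of_lt_of_lt hx.1 hc hxy hyc
  · exact hf.lt_of_isMaxOn hmax hc hx.1 hxy.ne

theorem strictAntiOn_Ici_of_isMaxOn (hf : StrictQuasiconcaveOn 𝕜 s f) (hmax : IsMaxOn f s c)
    (hc : c ∈ s) : StrictAntiOn f (s ∩ Ici c) := by
  intro x hx y hy hxy
  rcases hx.2.lt_or_eq with hcx | rfl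
  · simpa [min_eq_right (hmax hy.1)] using hf.min_lt_of_lt_of_lt hc hy.1 hcx hxy
  · exact hf.lt_of_isMaxOn hmax hx.1 hy.1 hxy.ne'

end StrictQuasiconcaveOn

theorem StrictConcaveOn.strictQuasiconcaveOn_div {𝕜 E : Type*} [Field 𝕜] [LinearOrder 𝕜]
    [IsStrictOrderedRing 𝕜] [AddCommGroup E] [Module 𝕜 E] {s : Set E} {g : E → 𝕜}
    {ℓ : E →ᵃ[𝕜] 𝕜} (hg : StrictConcaveOn 𝕜 s g) (hℓ : ∀ x ∈ s, 0 < ℓ x) :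
    StrictQuasiconcaveOn 𝕜 s (fun x => g x / ℓ x) := by
  refine ⟨hg.1, fun x hx y hy hxy a b ha hb hab => ?_⟩
  set m := min (g x / ℓ x) (g y / ℓ y)
  have hgx : m * ℓ x ≤ g x := (le_div_iff₀ (hℓ x hx)).1 (min_le_left _ _)
  have hgy : m * ℓ y ≤ g y := (le_div_iff₀ (hℓ y hy)).1 (min_le_right _ _)
  rw [lt_div_iff₀ (hℓ _ (hg.1 hx hy ha.le hb.le hab)), Convex.combo_affine_apply hab]
  calc m * (a • ℓ x + b • ℓ y) = a * (m * ℓ x) + b * (m * ℓ y) := by simp only [smul_eq_mul]; ring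
    _ ≤ a • g x + b • g y := by simp only [smul_eq_mul]; gcongr
    _ < g (a • x + b • y) := hg.2 hx hy hxy ha hb hab

theorem ConcaveOn.le_add_mul_sub_of_hasDerivAt {S : Set ℝ} {g : ℝ → ℝ} {d x y : ℝ}
    (hg : ConcaveOn ℝ S g) (hx : x ∈ S) (hy : y ∈ S) (hd : HasDerivAt g d x) :
    g y ≤ g x + d * (y - x) := by
  rcases lt_trichotomy x y with hxy | rfl | hyx
  · have hslope := hg.slope_le_of_hasDerivAt hx hy hxy hd
    rw [slope_def_field, div_le_iff₀ (sub_pos.2 hxy)] at hslope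
    linarith
  · simp
  · have hslope := hg.le_slope_of_hasDerivAt hy hx hyx hd
    rw [slope_def_field, le_div_iff₀ (sub_pos.2 hyx)] at hslope
    linarith

theorem ConcaveOn.isMaxOn_div_add_of_hasDerivAt {S : Set ℝ} {g : ℝ → ℝ} {α x : ℝ}
    (hg : ConcaveOn ℝ S g) (hα : ∀ y ∈ S, 0 < y + α) (hx : x ∈ S)
    (hd : HasDerivAt g (g x / (x + α)) x) : IsMaxOn (fun y => g y / (y + α)) S x := by
  intro y hy
  have hxα := (hα x hx).ne'
  have hyα := (hα y hy).ne'
  calc g y / (y + α) ≤ (g x + g x / (x + α) * (y - x)) / (y + α) := by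
        gcongr
        · exact (hα y hy).le
        · exact hg.le_add_mul_sub_of_hasDerivAt hx hy hd
    -- the tangent line at `x` passes through `(-α, 0)`
    _ = g x / (x + α) := by field_simp; ring

theorem IsLocalMax.hasDerivAt_eq_div_add {g : ℝ → ℝ} {d α c : ℝ}
    (hmax : IsLocalMax (fun y => g y / (y + α)) c) (hd : HasDerivAt g d c) (hc : c + α ≠ 0) :
    d = g c / (c + α) := by
  have h0 := hmax.hasDerivAt_eq_zero (hd.div ((hasDerivAt_id c).add_const α) hc)
  field_simp at h0 ⊢
  linarith

theorem stmt13 (g g' : ℝ → ℝ) (α : ℝ) (hα : 0 < α)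
    (hcont : ContinuousOn g (Set.Icc 0 1))
    (hderiv : ∀ s ∈ Set.Ioo (0:ℝ) 1, HasDerivAt g (g' s) s)
    (hconc : StrictConcaveOn ℝ (Set.Icc 0 1) g)
    (h0 : g 0 = 0) (h1 : g 1 = 0)
    (hpos : ∀ s ∈ Set.Ioo (0:ℝ) 1, 0 < g s) :
    ∃ sstar : ℝ, sstar ∈ Set.Ioo (0:ℝ) 1 ∧
      g' sstar = g sstar / (sstar + α) ∧
      (∀ s ∈ Set.Ioo (0:ℝ) 1, g' s = g s / (s + α) → s = sstar) ∧
      IsMaxOn (fun s => g s / (s + α)) (Set.Icc 0 1) sstar ∧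
      StrictMonoOn (fun s => g s / (s + α)) (Set.Icc 0 sstar) ∧
      StrictAntiOn (fun s => g s / (s + α)) (Set.Icc sstar 1) := by
  have hden : ∀ s ∈ Icc (0:ℝ) 1, 0 < s + α := fun s hs => by linarith [hs.1]
  have hq : StrictQuasiconcaveOn ℝ (Icc 0 1) (fun s => g s / (s + α)) :=
    hconc.strictQuasiconcaveOn_div (ℓ := AffineMap.id ℝ ℝ + AffineMap.const ℝ ℝ α) hden
  obtain ⟨c, hc, hmax⟩ : ∃ c ∈ Ioo (0:ℝ) 1, IsMaxOn (fun s => g s / (s + α)) (Icc 0 1) c := by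
    refine isCompact_Icc.exists_isMaxOn_mem_subset (z := 1 / 2)
      (hcont.div (continuousOn_id.add continuousOn_const) fun s hs => (hden s hs).ne')
      (by norm_num) ?_
    have hhalf : 0 < g (1 / 2) / (1 / 2 + α) := div_pos (hpos _ (by norm_num)) (by positivity)
    rw [Icc_sdiff_Ioo_same zero_le_one]
    rintro _ (rfl | rfl) <;> simpa [h0, h1] using hhalf
  have hcIcc := Ioo_subset_Icc_self hc
  refine ⟨c, hc, (hmax.isLocalMax (Icc_mem_nhds hc.1 hc.2)).hasDerivAt_eq_div_add (hderiv c hc)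
    (hden c hcIcc).ne', fun s hs htan => ?_, hmax, ?_, ?_⟩
  · refine hq.eq_of_isMaxOn (Ioo_subset_Icc_self hs) hcIcc ?_ hmax
    exact hconc.concaveOn.isMaxOn_div_add_of_hasDerivAt hden (Ioo_subset_Icc_self hs)
      (htan ▸ hderiv s hs)
  · exact (hq.strictMonoOn_Iic_of_isMaxOn hmax hcIcc).mono
      fun s hs => ⟨⟨hs.1, hs.2.trans hc.2.le⟩, hs.2⟩
  · exact (hq.strictAntiOn_Ici_of_isMaxOn hmax hcIcc).mono
      fun s hs => ⟨⟨hc.1.le.trans hs.1, hs.2⟩, hs.1⟩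
end
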